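/- arXiv:2505.19523 — 4 statements merged into one kernel-verified Lean document; each statement's English description precedes it below -/
import Mathlib

section
/- Let a > 0, b ≥ 0, c > 0, σB > 0, σE > 0 be reals, and define C(P) = log2(1 + aP/σB²) − log2(1 + bP/(cP + σE²)) for P ≥ 0. If b/a ≤ σE²/σB², then C is monotone nondecreasing on [0, ∞). -/
open Real Set

/- Put `u = a/σB²`, `v = c/σE²`, `w = (b+c)/σE²`. Then `1 + bP/(cP+σE²) = (1+wP)/(1+vP)`, so
`C(P) = log₂ ((1+uP)(1+vP)/(1+wP))`, and the hypothesis says `w ≤ u + v`. Cross-multiplying, that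
ratio is nondecreasing because `(1+uy)(1+vy)(1+wx) - (1+ux)(1+vx)(1+wy)` factors as
`(y-x)(u+v-w + uv(x+y) + uvwxy)`. -/

theorem monotoneOn_logb_sub_logb {B : ℝ} (hB : 1 < B) {f g : ℝ → ℝ} {s : Set ℝ}
    (hf : ∀ x ∈ s, 0 < f x) (hg : ∀ x ∈ s, 0 < g x) (h : MonotoneOn (fun x => f x / g x) s) :
    MonotoneOn (fun x => logb B (f x) - logb B (g x)) s := by
  intro x hx y hy hxy
  simp only [← logb_div (hf x hx).ne' (hg x hx).ne', ← logb_div (hf y hy).ne' (hg y hy).ne']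
  exact logb_le_logb_of_le hB (div_pos (hf x hx) (hg x hx)) (h hx hy hxy)

theorem monotoneOn_one_add_mul_mul_one_add_mul_div_one_add_mul {u v w : ℝ} (hu : 0 ≤ u)
    (hv : 0 ≤ v) (hw : 0 ≤ w) (hwuv : w ≤ u + v) :
    MonotoneOn (fun P => (1 + u * P) * (1 + v * P) / (1 + w * P)) (Ici 0) := by
  intro x (hx : 0 ≤ x) y (hy : 0 ≤ y) hxy
  have hfactor : (1 + u * y) * (1 + v * y) * (1 + w * x) - (1 + u * x) * (1 + v * x) * (1 + w * y)
      = (y - x) * (u + v - w + u * v * (x + y) + u * v * w * x * y) := by ring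
  have hnonneg : 0 ≤ (y - x) * (u + v - w + u * v * (x + y) + u * v * w * x * y) :=
    mul_nonneg (sub_nonneg.mpr hxy) (by have := sub_nonneg.mpr hwuv; positivity)
  rw [div_le_div_iff₀ (by positivity) (by positivity)]
  linarith

theorem stmt_0 (a b c σB σE : ℝ) (ha : 0 < a) (hb : 0 ≤ b) (hc : 0 < c)
    (hσB : 0 < σB) (hσE : 0 < σE)
    (hcond : b / a ≤ σE ^ 2 / σB ^ 2) :
    MonotoneOn (fun P : ℝ =>
      Real.logb 2 (1 + a * P / σB ^ 2) - Real.logb 2 (1 + b * P / (c * P + σE ^ 2)))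
      (Set.Ici (0 : ℝ)) := by
  have hwuv : (b + c) / σE ^ 2 ≤ a / σB ^ 2 + c / σE ^ 2 := by
    rw [div_le_div_iff₀ ha (by positivity)] at hcond
    rw [add_div, add_le_add_iff_right, div_le_div_iff₀ (by positivity) (by positivity)]
    linarith
  have hratio : EqOn
      (fun P => (1 + a / σB ^ 2 * P) * (1 + c / σE ^ 2 * P) / (1 + (b + c) / σE ^ 2 * P))
      (fun P => (1 + a * P / σB ^ 2) / (1 + b * P / (c * P + σE ^ 2))) (Ici 0) := by
    intro P (hP : 0 ≤ P)
    field_simp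
    ring
  refine monotoneOn_logb_sub_logb one_lt_two (fun P (hP : 0 ≤ P) => by positivity)
    (fun P (hP : 0 ≤ P) => by positivity) ?_
  exact (monotoneOn_one_add_mul_mul_one_add_mul_div_one_add_mul (by positivity) (by positivity)
    (by positivity) hwuv).congr hratio
end

section
/- Let a > 0, b ≥ 0, σB > 0, σE > 0, c > 0, P_TX > 0, and define C(P) = log2(1 + aP/σB²) − log2(1 + bP/(cP + σE²)). Suppose there exists P' ∈ [0, P_TX] with C(P') > 0 and b/a > σE²/σB². Then C first decreases then increases on [0, P_TX], and max over [0, P_TX] of C(P) is attained at P = P_TX. -/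
/-!
Clearing denominators, `C P₁ ≤ C P₂` for `P₁, P₂ ≥ 0` is equivalent to
`0 ≤ (P₂ - P₁) * Q(P₁, P₂)` with `Q(x, y) = a c (b + c) x y + a c σE² (x + y) + σE² (a σE² - b σB²)`,
which is increasing in each variable on the nonnegative quadrant and negative at the origin
because `b / a > σE² / σB²`. So `Q` changes sign at the positive root `t` of `Q(t, t) = 0`, and
`C` decreases on `[0, t]` and increases afterwards. A function of this shape is maximised over
an interval at an endpoint, and since `C 0 = 0 < C P'` it cannot be the left one.
-/

open Real Set

section Valley

variable {α β : Type*} [LinearOrder α] [LinearOrder β] {f : α → β} {a b t : α}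

theorem exists_antitoneOn_monotoneOn_Icc (hab : a ≤ b) (hat : a ≤ t)
    (hanti : AntitoneOn f (Icc a t)) (hmono : MonotoneOn f (Ici t)) :
    ∃ s ∈ Icc a b, AntitoneOn f (Icc a s) ∧ MonotoneOn f (Icc s b) := by
  refine ⟨min t b, ⟨le_min hat hab, min_le_right t b⟩,
    hanti.mono (Icc_subset_Icc_right (min_le_left t b)), ?_⟩
  rcases le_total t b with htb | hbt
  · rw [min_eq_left htb]
    exact hmono.mono Icc_subset_Ici_self
  · rw [min_eq_right hbt, Icc_self]
    exact monotoneOn_singleton f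

theorem isMaxOn_right_of_antitoneOn_of_monotoneOn (hanti : AntitoneOn f (Icc a t))
    (hmono : MonotoneOn f (Icc t b)) (hpos : ∃ x ∈ Icc a b, f a < f x) :
    IsMaxOn f (Icc a b) b := by
  have hle_max : ∀ x ∈ Icc a b, f x ≤ max (f a) (f b) := by
    rintro x ⟨hax, hxb⟩
    rcases le_total x t with hxt | htx
    · exact le_max_of_le_left (hanti ⟨le_rfl, hax.trans hxt⟩ ⟨hax, hxt⟩ hax)
    · exact le_max_of_le_right (hmono ⟨htx, hxb⟩ ⟨htx.trans hxb, le_rfl⟩ hxb)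
  obtain ⟨x, hx, hax⟩ := hpos
  have hab : f a ≤ f b := by
    rcases le_max_iff.mp (hle_max x hx) with h | h
    · exact absurd h (not_le.mpr hax)
    · exact hax.le.trans h
  rw [isMaxOn_iff]
  intro y hy
  simpa only [max_eq_right hab] using hle_max y hy

end Valley

theorem exists_pos_quadratic_eq_zero {a b c : ℝ} (ha : 0 < a) (hb : 0 ≤ b) (hc : c < 0) :
    ∃ x, 0 < x ∧ a * (x * x) + b * x + c = 0 := by
  have hdisc : 0 ≤ discrim a b c := by unfold discrim; nlinarith
  set s := √(discrim a b c)
  have hs : discrim a b c = s * s := (mul_self_sqrt hdisc).symm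
  have hbs : b < s := by
    rw [← abs_of_nonneg hb, ← sqrt_sq_eq_abs]
    exact sqrt_lt_sqrt (sq_nonneg b) (by unfold discrim; nlinarith)
  exact ⟨(-b + s) / (2 * a), div_pos (by linarith) (by positivity),
    (quadratic_eq_zero_iff ha.ne' hs _).mpr (Or.inl rfl)⟩

noncomputable def secrecyRate (a b c σB σE P : ℝ) : ℝ :=
  logb 2 (1 + a * P / σB ^ 2) - logb 2 (1 + b * P / (c * P + σE ^ 2))

section SecrecyRate

variable {a b c σB σE : ℝ}

@[simp]
theorem secrecyRate_zero : secrecyRate a b c σB σE 0 = 0 := by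
  simp [secrecyRate]

theorem secrecyRate_eq_logb (ha : 0 ≤ a) (hb : 0 ≤ b) (hc : 0 ≤ c) (hσB : 0 < σB)
    (hσE : 0 < σE) {P : ℝ} (hP : 0 ≤ P) :
    secrecyRate a b c σB σE P =
      logb 2 ((σB ^ 2 + a * P) * (c * P + σE ^ 2) / (σB ^ 2 * ((b + c) * P + σE ^ 2))) := by
  have hden : 0 < c * P + σE ^ 2 := by positivity
  rw [secrecyRate, ← logb_div (by positivity) (by positivity)]
  congr 1
  field_simp
  ring

theorem secrecyRate_le_secrecyRate_iff (ha : 0 ≤ a) (hb : 0 ≤ b) (hc : 0 ≤ c)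
    (hσB : 0 < σB) (hσE : 0 < σE) {P₁ P₂ : ℝ} (hP₁ : 0 ≤ P₁) (hP₂ : 0 ≤ P₂) :
    secrecyRate a b c σB σE P₁ ≤ secrecyRate a b c σB σE P₂ ↔
      0 ≤ (P₂ - P₁) * (a * c * (b + c) * (P₁ * P₂) + a * c * σE ^ 2 * (P₁ + P₂) +
        σE ^ 2 * (a * σE ^ 2 - b * σB ^ 2)) := by
  rw [secrecyRate_eq_logb ha hb hc hσB hσE hP₁, secrecyRate_eq_logb ha hb hc hσB hσE hP₂,
    logb_le_logb one_lt_two (by positivity) (by positivity),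
    div_le_div_iff₀ (by positivity) (by positivity), ← sub_nonneg]
  rw [← mul_nonneg_iff_of_pos_left (pow_pos hσB 2) (b := (P₂ - P₁) * _)]
  exact Iff.of_eq (congrArg _ (by ring))

theorem secrecyRate_antitoneOn_monotoneOn (ha : 0 < a) (hb : 0 ≤ b) (hc : 0 < c)
    (hσB : 0 < σB) (hσE : 0 < σE) (hba : a * σE ^ 2 < b * σB ^ 2) :
    ∃ t, 0 < t ∧ AntitoneOn (secrecyRate a b c σB σE) (Icc 0 t) ∧
      MonotoneOn (secrecyRate a b c σB σE) (Ici t) := by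
  have hle := @secrecyRate_le_secrecyRate_iff a b c σB σE ha.le hb hc.le hσB hσE
  set A := a * c * (b + c)
  set B := a * c * σE ^ 2
  set K := σE ^ 2 * (a * σE ^ 2 - b * σB ^ 2)
  have hA : 0 < A := by positivity
  have hB : 0 ≤ B := by positivity
  have hK : K < 0 := mul_neg_of_pos_of_neg (by positivity) (by linarith)
  obtain ⟨t, ht, hroot⟩ := exists_pos_quadratic_eq_zero hA (by positivity : 0 ≤ 2 * B) hK
  refine ⟨t, ht, fun x hx y hy hxy => ?_, fun x hx y hy hxy => ?_⟩
  · refine (hle hy.1 hx.1).mpr (mul_nonneg_of_nonpos_of_nonpos (by linarith) ?_)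
    have hprod : A * (y * x) ≤ A * (t * t) :=
      mul_le_mul_of_nonneg_left (mul_le_mul hy.2 hx.2 hx.1 ht.le) hA.le
    have hsum : B * (y + x) ≤ B * (t + t) :=
      mul_le_mul_of_nonneg_left (add_le_add hy.2 hx.2) hB
    linarith
  · have hx₀ : 0 ≤ x := ht.le.trans hx
    refine (hle hx₀ (hx₀.trans hxy)).mpr (mul_nonneg (by linarith) ?_)
    have hprod : A * (t * t) ≤ A * (x * y) :=
      mul_le_mul_of_nonneg_left (mul_le_mul hx hy ht.le hx₀) hA.le
    have hsum : B * (t + t) ≤ B * (x + y) :=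
      mul_le_mul_of_nonneg_left (add_le_add hx hy) hB
    linarith

end SecrecyRate

theorem stmt_2 (a b c σB σE PTX : ℝ) (ha : 0 < a) (hb : 0 ≤ b) (hc : 0 < c)
    (hσB : 0 < σB) (hσE : 0 < σE) (hPTX : 0 < PTX)
    (C : ℝ → ℝ)
    (hC : ∀ P : ℝ, C P =
      Real.logb 2 (1 + a * P / σB ^ 2) - Real.logb 2 (1 + b * P / (c * P + σE ^ 2)))
    (hpos : ∃ P' ∈ Set.Icc (0 : ℝ) PTX, 0 < C P')
    (hcond : σE ^ 2 / σB ^ 2 < b / a) :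
    (∃ t ∈ Set.Icc (0 : ℝ) PTX,
        AntitoneOn C (Set.Icc 0 t) ∧ MonotoneOn C (Set.Icc t PTX)) ∧
    (∀ P ∈ Set.Icc (0 : ℝ) PTX, C P ≤ C PTX) := by
  obtain rfl : C = secrecyRate a b c σB σE := funext hC
  obtain ⟨t, ht, hanti, hmono⟩ := secrecyRate_antitoneOn_monotoneOn ha hb hc hσB hσE
    (by rwa [div_lt_div_iff₀ (by positivity) ha, mul_comm] at hcond)
  obtain ⟨s, hs, hanti', hmono'⟩ := exists_antitoneOn_monotoneOn_Icc hPTX.le ht.le hanti hmono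
  refine ⟨⟨s, hs, hanti', hmono'⟩, isMaxOn_iff.mp ?_⟩
  refine isMaxOn_right_of_antitoneOn_of_monotoneOn hanti' hmono' ?_
  simpa only [secrecyRate_zero] using hpos
end

section
/- Let α > 0, β ≥ 0, σB > 0, σE > 0 and γ = 0. Define C(φ) = log2(1 + αφ/σB²) − log2(1 + βφ/σE²) on [0,1]. If ασE² ≥ βσB², then C attains its maximum on [0,1] at φ = 1; if ασE² < βσB², then C attains its maximum at φ = 0 with C(0) = 0. -/
open Real Set

lemma key_aux (a b φ : ℝ) (ha : 0 < a) (hb : 0 ≤ b) (hab : b ≤ a)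
    (hφ0 : 0 ≤ φ) (hφ1 : φ ≤ 1) :
    Real.logb 2 (1 + a * φ) - Real.logb 2 (1 + b * φ) ≤
      Real.logb 2 (1 + a) - Real.logb 2 (1 + b) := by
  have h1 : (0:ℝ) < 1 + a * φ := by nlinarith
  have h2 : (0:ℝ) < 1 + b * φ := by nlinarith
  have h3 : (0:ℝ) < 1 + a := by linarith
  have h4 : (0:ℝ) < 1 + b := by linarith
  have hmul : (1 + a * φ) * (1 + b) ≤ (1 + a) * (1 + b * φ) := by
    nlinarith [mul_nonneg (sub_nonneg.2 hab) (sub_nonneg.2 hφ1)]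
  have hlog : Real.logb 2 ((1 + a * φ) * (1 + b)) ≤
      Real.logb 2 ((1 + a) * (1 + b * φ)) :=
    Real.logb_le_logb_of_le (by norm_num) (by positivity) hmul
  rw [Real.logb_mul h1.ne' h4.ne', Real.logb_mul h3.ne' h2.ne'] at hlog
  linarith

theorem stmt_9 (α β σB σE : ℝ) (hα : 0 < α) (hβ : 0 ≤ β)
    (hσB : 0 < σB) (hσE : 0 < σE)
    (C : ℝ → ℝ)
    (hC : ∀ φ : ℝ, C φ =
      Real.logb 2 (1 + α * φ / σB ^ 2) - Real.logb 2 (1 + β * φ / σE ^ 2)) :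
    (β * σB ^ 2 ≤ α * σE ^ 2 → ∀ φ ∈ Set.Icc (0 : ℝ) 1, C φ ≤ C 1) ∧
    (α * σE ^ 2 < β * σB ^ 2 →
      (∀ φ ∈ Set.Icc (0 : ℝ) 1, C φ ≤ C 0) ∧ C 0 = 0) := by
  have hB2 : (0:ℝ) < σB ^ 2 := by positivity
  have hE2 : (0:ℝ) < σE ^ 2 := by positivity
  set a := α / σB ^ 2 with ha_def
  set b := β / σE ^ 2 with hb_def
  have ha : 0 < a := by positivity
  have hb : 0 ≤ b := by positivity
  have hrw : ∀ φ : ℝ, C φ = Real.logb 2 (1 + a * φ) - Real.logb 2 (1 + b * φ) := by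
    intro φ
    rw [hC φ]
    simp only [ha_def, hb_def]; congr 2 <;> field_simp
  constructor
  · intro h φ hφ
    have hab : b ≤ a := by
      rw [ha_def, hb_def, div_le_div_iff₀ hE2 hB2]
      linarith
    rw [hrw φ, hrw 1]
    simpa using key_aux a b φ ha hb hab hφ.1 hφ.2
  · intro h
    have hab : a ≤ b := by
      rw [ha_def, hb_def, div_le_div_iff₀ hB2 hE2]
      linarith
    have hC0 : C 0 = 0 := by rw [hrw 0]; simp
    refine ⟨fun φ hφ => ?_, hC0⟩
    rw [hrw φ, hC0]
    have h1 : (0:ℝ) < 1 + a * φ := by nlinarith [hφ.1, hφ.2]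
    have hle : 1 + a * φ ≤ 1 + b * φ := by nlinarith [hφ.1]
    have := Real.logb_le_logb_of_le (b := 2) (by norm_num) h1 hle
    linarith
end

section
/- Let α, β, γ, σB, σE > 0 with 0 < β < γ. Then the discriminant Δ = 4αβγ(γ+σE²)·[(γ−β)σB² + α(γ+σE²)] of the quadratic h(φ) = αγ(γ−β)φ² − 2αγ(γ+σE²)φ + (γ+σE²)(α(γ+σE²) − βσB²) is strictly positive, and the smaller root φ_a = (γ+σE²)/(γ−β) − √Δ/(2αγ(γ−β)) satisfies: h(φ) > 0 for 0 ≤ φ < min{max(φ_a,0), 1} when φ_a > 0, and h(φ) < 0 for min{max(φ_a,0),1} < φ ≤ 1 when φ_a < 1. -/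
/-! The quadratic `h` has leading coefficient `αγ(γ - β) > 0` and discriminant `Δ > 0`, so it
factors as `αγ(γ - β)(φ - φa)(φ - φb)` with `φa < φb`. Its vertex `(γ + σE²)/(γ - β)` already
exceeds `1`, hence so does `φb`: on `[0, 1]` the sign of `h` is decided by the side of `φa`
on which `φ` lies. -/

open Real

section Quadratic

variable {K : Type*} [Field K] [NeZero (2 : K)] {a b c s : K}

theorem quadratic_eq_mul_sub_mul_sub (ha : a ≠ 0) (hs : discrim a b c = s * s) (x : K) :
    a * (x * x) + b * x + c = a * (x - (-b - s) / (2 * a)) * (x - (-b + s) / (2 * a)) := by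
  have h2a : (2 : K) * a ≠ 0 := mul_ne_zero two_ne_zero ha
  rw [discrim] at hs
  field_simp
  linear_combination -hs

end Quadratic

section Sign

variable {K : Type*} [Field K] [LinearOrder K] [IsStrictOrderedRing K] {a x r₁ r₂ : K}

theorem mul_sub_mul_sub_pos_of_lt_of_lt (ha : 0 < a) (h₁ : x < r₁) (h₂ : x < r₂) :
    0 < a * (x - r₁) * (x - r₂) :=
  mul_pos_of_neg_of_neg (mul_neg_of_pos_of_neg ha (sub_neg.2 h₁)) (sub_neg.2 h₂)

theorem mul_sub_mul_sub_neg_of_lt_of_lt (ha : 0 < a) (h₁ : r₁ < x) (h₂ : x < r₂) :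
    a * (x - r₁) * (x - r₂) < 0 :=
  mul_neg_of_pos_of_neg (mul_pos ha (sub_pos.2 h₁)) (sub_neg.2 h₂)

end Sign

theorem discrim_secrecyQuadratic (α β γ σB σE : ℝ) :
    discrim (α * γ * (γ - β)) (-(2 * α * γ * (γ + σE ^ 2)))
        ((γ + σE ^ 2) * (α * (γ + σE ^ 2) - β * σB ^ 2)) =
      4 * α * β * γ * (γ + σE ^ 2) * ((γ - β) * σB ^ 2 + α * (γ + σE ^ 2)) := by
  rw [discrim]
  ring

theorem stmt_16_general (α β γ σB σE : ℝ) (hα : 0 < α) (hβ : 0 < β) (hγ : 0 < γ)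
    (hβγ : β < γ)
    (h : ℝ → ℝ)
    (hh : ∀ φ : ℝ, h φ =
      α * γ * (γ - β) * φ ^ 2 - 2 * α * γ * (γ + σE ^ 2) * φ +
        (γ + σE ^ 2) * (α * (γ + σE ^ 2) - β * σB ^ 2))
    (Δ : ℝ)
    (hΔ : Δ = 4 * α * β * γ * (γ + σE ^ 2) * ((γ - β) * σB ^ 2 + α * (γ + σE ^ 2)))
    (φa : ℝ)
    (hφa : φa = (γ + σE ^ 2) / (γ - β) - Real.sqrt Δ / (2 * α * γ * (γ - β))) :
    0 < Δ ∧
    (0 < φa → ∀ φ : ℝ, 0 ≤ φ → φ < min (max φa 0) 1 → 0 < h φ) ∧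
    (φa < 1 → ∀ φ : ℝ, min (max φa 0) 1 < φ → φ ≤ 1 → h φ < 0) := by
  have hγβ : 0 < γ - β := sub_pos.2 hβγ
  have hΔ_pos : 0 < Δ := by
    rw [hΔ]
    have : 0 < (γ - β) * σB ^ 2 + α * (γ + σE ^ 2) := by positivity
    positivity
  set a := α * γ * (γ - β)
  have ha : 0 < a := by positivity
  set b := -(2 * α * γ * (γ + σE ^ 2))
  set s := √Δ
  have hs : 0 < s := sqrt_pos.2 hΔ_pos
  have hroot : (-b - s) / (2 * a) = φa := by
    rw [hφa]
    field_simp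
    ring
  set φb := (-b + s) / (2 * a)
  have hφab : φa < φb := by
    rw [← hroot]
    exact div_lt_div_of_pos_right (by linarith) (by positivity)
  have hφb : 1 < φb :=
    calc 1 < (γ + σE ^ 2) / (γ - β) := (one_lt_div hγβ).2 (by linarith [sq_nonneg σE])
      _ = -b / (2 * a) := by field_simp; ring
      _ < φb := div_lt_div_of_pos_right (by linarith) (by positivity)
  have hfactor : ∀ φ, h φ = a * (φ - φa) * (φ - φb) := fun φ => by
    rw [hh, ← hroot, ← quadratic_eq_mul_sub_mul_sub ha.ne'
      ((discrim_secrecyQuadratic α β γ σB σE).trans (by rw [← hΔ, mul_self_sqrt hΔ_pos.le]))]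
    ring
  refine ⟨hΔ_pos, fun _ φ hφ₀ hφ => ?_, fun _ φ hφ hφ₁ => ?_⟩
  · have hφa' : φ < φa := by
      simp only [lt_min_iff, lt_max_iff] at hφ
      rcases hφ with ⟨hφ | hφ, -⟩ <;> linarith
    rw [hfactor]
    exact mul_sub_mul_sub_pos_of_lt_of_lt ha hφa' (by linarith)
  · have hφa' : φa < φ := by
      simp only [min_lt_iff, max_lt_iff] at hφ
      rcases hφ with ⟨hφ, -⟩ | hφ <;> linarith
    rw [hfactor]
    exact mul_sub_mul_sub_neg_of_lt_of_lt ha hφa' (by linarith)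

theorem stmt_16 (α β γ σB σE : ℝ) (hα : 0 < α) (hβ : 0 < β) (hγ : 0 < γ)
    (hσB : 0 < σB) (hσE : 0 < σE) (hβγ : β < γ)
    (h : ℝ → ℝ)
    (hh : ∀ φ : ℝ, h φ =
      α * γ * (γ - β) * φ ^ 2 - 2 * α * γ * (γ + σE ^ 2) * φ +
        (γ + σE ^ 2) * (α * (γ + σE ^ 2) - β * σB ^ 2))
    (Δ : ℝ)
    (hΔ : Δ = 4 * α * β * γ * (γ + σE ^ 2) * ((γ - β) * σB ^ 2 + α * (γ + σE ^ 2)))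
    (φa : ℝ)
    (hφa : φa = (γ + σE ^ 2) / (γ - β) - Real.sqrt Δ / (2 * α * γ * (γ - β))) :
    0 < Δ ∧
    (0 < φa → ∀ φ : ℝ, 0 ≤ φ → φ < min (max φa 0) 1 → 0 < h φ) ∧
    (φa < 1 → ∀ φ : ℝ, min (max φa 0) 1 < φ → φ ≤ 1 → h φ < 0) :=
  stmt_16_general α β γ σB σE hα hβ hγ hβγ h hh Δ hΔ φa hφa
end
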